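/- arXiv:2004.04327 — 3 statements merged into one kernel-verified Lean document; each statement's English description precedes it below -/
import Mathlib

section
/- For every λ_l > 0 and ρ > 0, the map μ ↦ P_SL(λ_l, μ, ρ) is strictly concave on (0, ∞); in particular the linear vehicle intensity μ yields a diminishing return in the sidelink association probability. -/
open MeasureTheory Real Set Filter

noncomputable def A (rho mu : ℝ) : ℝ :=
  ∫ u in (0:ℝ)..rho, (1 - Real.exp (-2 * mu * Real.sqrt (rho ^ 2 - u ^ 2)))

noncomputable def P_SL (lamL mu rho : ℝ) : ℝ := 1 - Real.exp (-2 * lamL * A rho mu)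

noncomputable def P_DL (lamL mu rho : ℝ) : ℝ := Real.exp (-2 * lamL * A rho mu)

private lemma cont_integrand (rho mu : ℝ) :
    ContinuousOn (fun u => 1 - Real.exp (-2 * mu * Real.sqrt (rho ^ 2 - u ^ 2)))
      (Set.Icc 0 rho) := by
  apply Continuous.continuousOn; fun_prop

private lemma exp_combo {x y a b : ℝ} (ha : 0 ≤ a) (hb : 0 ≤ b) (hab : a + b = 1) :
    Real.exp (a * x + b * y) ≤ a * Real.exp x + b * Real.exp y := by
  have := convexOn_exp.2 (Set.mem_univ x) (Set.mem_univ y) ha hb hab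
  simpa using this

private lemma exp_combo_strict {x y a b : ℝ} (hxy : x ≠ y) (ha : 0 < a) (hb : 0 < b)
    (hab : a + b = 1) :
    Real.exp (a * x + b * y) < a * Real.exp x + b * Real.exp y := by
  have := strictConvexOn_exp.2 (Set.mem_univ x) (Set.mem_univ y) hxy ha hb hab
  simpa using this

private lemma A_strict (rho : ℝ) (hrho : 0 < rho) {x y : ℝ} (hxy : x ≠ y)
    {a b : ℝ} (ha : 0 < a) (hb : 0 < b) (hab : a + b = 1) :
    a * A rho x + b * A rho y < A rho (a * x + b * y) := by
  have hix : IntervalIntegrable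
      (fun u => a * (1 - Real.exp (-2 * x * Real.sqrt (rho ^ 2 - u ^ 2)))) volume 0 rho :=
    ((cont_integrand rho x).intervalIntegrable_of_Icc hrho.le).const_mul a
  have hiy : IntervalIntegrable
      (fun u => b * (1 - Real.exp (-2 * y * Real.sqrt (rho ^ 2 - u ^ 2)))) volume 0 rho :=
    ((cont_integrand rho y).intervalIntegrable_of_Icc hrho.le).const_mul b
  have hax : a * A rho x + b * A rho y =
      ∫ u in (0:ℝ)..rho,
        (a * (1 - Real.exp (-2 * x * Real.sqrt (rho ^ 2 - u ^ 2))) +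
         b * (1 - Real.exp (-2 * y * Real.sqrt (rho ^ 2 - u ^ 2)))) := by
    rw [intervalIntegral.integral_add hix hiy, intervalIntegral.integral_const_mul,
      intervalIntegral.integral_const_mul, A, A]
  rw [hax, A]
  apply intervalIntegral.integral_lt_integral_of_continuousOn_of_le_of_exists_lt hrho
  · exact ((cont_integrand rho x).const_smul a).add ((cont_integrand rho y).const_smul b)
  · exact cont_integrand rho _
  · intro u _
    set s := Real.sqrt (rho ^ 2 - u ^ 2) with hs
    have hkey : Real.exp (a * (-2 * x * s) + b * (-2 * y * s)) ≤
        a * Real.exp (-2 * x * s) + b * Real.exp (-2 * y * s) := exp_combo ha.le hb.le hab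
    have harg : -2 * (a * x + b * y) * s = a * (-2 * x * s) + b * (-2 * y * s) := by ring
    rw [harg]
    nlinarith [hkey]
  · refine ⟨0, ⟨le_refl 0, hrho.le⟩, ?_⟩
    have hsq : Real.sqrt (rho ^ 2 - (0:ℝ) ^ 2) = rho := by
      simp [Real.sqrt_sq hrho.le]
    have hne : -2 * x * rho ≠ -2 * y * rho := by
      intro h; apply hxy
      have h2 := mul_right_cancel₀ hrho.ne' h
      have : (-2 : ℝ) ≠ 0 := by norm_num
      exact mul_left_cancel₀ this h2
    have hkey : Real.exp (a * (-2 * x * rho) + b * (-2 * y * rho)) <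
        a * Real.exp (-2 * x * rho) + b * Real.exp (-2 * y * rho) :=
      exp_combo_strict hne ha hb hab
    have harg : -2 * (a * x + b * y) * rho = a * (-2 * x * rho) + b * (-2 * y * rho) := by ring
    simp only [hsq, harg]
    nlinarith [hkey]

theorem sidelink_assoc_strictConcave_in_mu (lamL rho : ℝ) (hlamL : 0 < lamL) (hrho : 0 < rho) :
    StrictConcaveOn ℝ (Set.Ioi (0:ℝ)) (fun mu => P_SL lamL mu rho) := by
  refine ⟨convex_Ioi 0, ?_⟩
  intro x hx y hy hxy a b ha hb hab
  simp only [P_SL, smul_eq_mul]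
  have hA := A_strict rho hrho hxy ha hb hab
  have h1 : Real.exp (-2 * lamL * A rho (a * x + b * y)) <
      Real.exp (-2 * lamL * (a * A rho x + b * A rho y)) := by
    apply Real.exp_lt_exp.2; nlinarith
  have h2 : Real.exp (-2 * lamL * (a * A rho x + b * A rho y)) ≤
      a * Real.exp (-2 * lamL * A rho x) + b * Real.exp (-2 * lamL * A rho y) := by
    have hkey := exp_combo (x := -2 * lamL * A rho x) (y := -2 * lamL * A rho y)
      ha.le hb.le hab
    have harg : -2 * lamL * (a * A rho x + b * A rho y) =
        a * (-2 * lamL * A rho x) + b * (-2 * lamL * A rho y) := by ring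
    rw [harg]; exact hkey
  nlinarith
end

section
/- For every μ > 0, the map ρ ↦ A(ρ, μ) = ∫₀^ρ (1 − exp(−2 μ √(ρ² − u²))) du is strictly increasing on (0, ∞); consequently, for every λ_l > 0, the sidelink association probability ρ ↦ P_SL(λ_l, μ, ρ) is strictly increasing in the broadcast radius ρ, and the downlink association probability ρ ↦ P_DL(λ_l, μ, ρ) is strictly decreasing in ρ. -/
open MeasureTheory Real Set Filter

lemma f_cont (rho mu : ℝ) :
    Continuous (fun u : ℝ => 1 - Real.exp (-2 * mu * Real.sqrt (rho ^ 2 - u ^ 2))) := by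
  continuity

lemma f_intble (rho mu a b : ℝ) :
    IntervalIntegrable (fun u : ℝ => 1 - Real.exp (-2 * mu * Real.sqrt (rho ^ 2 - u ^ 2)))
      volume a b :=
  (f_cont rho mu).intervalIntegrable a b

lemma A_strictMono (mu : ℝ) (hmu : 0 < mu) :
    StrictMonoOn (fun rho => A rho mu) (Set.Ioi (0:ℝ)) := by
  intro r1 h1 r2 h2 hlt
  simp only [Set.mem_Ioi] at h1 h2
  have hsplit : A r2 mu =
      (∫ u in (0:ℝ)..r1, (1 - Real.exp (-2 * mu * Real.sqrt (r2 ^ 2 - u ^ 2)))) +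
      ∫ u in r1..r2, (1 - Real.exp (-2 * mu * Real.sqrt (r2 ^ 2 - u ^ 2))) := by
    rw [A, ← intervalIntegral.integral_add_adjacent_intervals (f_intble r2 mu 0 r1)
      (f_intble r2 mu r1 r2)]
  have hmono : A r1 mu ≤ ∫ u in (0:ℝ)..r1,
      (1 - Real.exp (-2 * mu * Real.sqrt (r2 ^ 2 - u ^ 2))) := by
    apply intervalIntegral.integral_mono_on h1.le (f_intble r1 mu 0 r1) (f_intble r2 mu 0 r1)
    intro u _
    have hs : Real.sqrt (r1 ^ 2 - u ^ 2) ≤ Real.sqrt (r2 ^ 2 - u ^ 2) := by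
      apply Real.sqrt_le_sqrt
      nlinarith
    have : Real.exp (-2 * mu * Real.sqrt (r2 ^ 2 - u ^ 2)) ≤
        Real.exp (-2 * mu * Real.sqrt (r1 ^ 2 - u ^ 2)) := by
      apply Real.exp_le_exp.2
      nlinarith
    linarith
  have hpos : 0 < ∫ u in r1..r2, (1 - Real.exp (-2 * mu * Real.sqrt (r2 ^ 2 - u ^ 2))) := by
    apply intervalIntegral.intervalIntegral_pos_of_pos_on (f_intble r2 mu r1 r2) _ hlt
    intro u hu
    have hu1 : 0 < u := lt_trans h1 hu.1
    have hq : 0 < r2 ^ 2 - u ^ 2 := by nlinarith [hu.2]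
    have hs : 0 < Real.sqrt (r2 ^ 2 - u ^ 2) := Real.sqrt_pos.2 hq
    have : Real.exp (-2 * mu * Real.sqrt (r2 ^ 2 - u ^ 2)) < 1 := by
      rw [Real.exp_lt_one_iff]
      nlinarith
    linarith
  simp only
  rw [hsplit]; linarith

theorem assoc_monotone_in_rho (mu : ℝ) (hmu : 0 < mu) :
    StrictMonoOn (fun rho => A rho mu) (Set.Ioi (0:ℝ)) ∧
    ∀ lamL : ℝ, 0 < lamL →
      StrictMonoOn (fun rho => P_SL lamL mu rho) (Set.Ioi (0:ℝ)) ∧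
      StrictAntiOn (fun rho => P_DL lamL mu rho) (Set.Ioi (0:ℝ)) := by
  refine ⟨A_strictMono mu hmu, fun lamL hlam => ⟨?_, ?_⟩⟩
  · intro r1 h1 r2 h2 hlt
    have hA := A_strictMono mu hmu h1 h2 hlt
    simp only [P_SL]
    have : Real.exp (-2 * lamL * A r2 mu) < Real.exp (-2 * lamL * A r1 mu) := by
      apply Real.exp_lt_exp.2
      simp only at hA
      nlinarith
    linarith
  · intro r1 h1 r2 h2 hlt
    have hA := A_strictMono mu hmu h1 h2 hlt
    simp only [P_DL]
    apply Real.exp_lt_exp.2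
    simp only at hA
    nlinarith
end

section
/- With all parameters other than τ fixed, lim_{τ → 0⁺} C_DL(τ) = P_DL(λ_l, μ, ρ); that is, as the SIR threshold tends to zero, the downlink coverage probability converges to the downlink association probability exp(−2 λ_l ∫₀^ρ (1 − exp(−2 μ √(ρ² − u²))) du). -/
open MeasureTheory Real Set Filter

noncomputable def K1 (tau alpha x : ℝ) : ℝ :=
  x ^ 2 + 2 * ∫ r in Set.Ioi x,
    tau * x ^ alpha * r ^ (1 - alpha) / (1 + tau * x ^ alpha * r ^ (-alpha))

noncomputable def K2 (mu rho alpha eta tau x : ℝ) : ℝ :=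
  ∫ r in (0:ℝ)..rho,
    (1 - Real.exp (-2 * mu * Real.sqrt (rho ^ 2 - r ^ 2)
      - 2 * mu * ∫ u in Set.Ioi (Real.sqrt (rho ^ 2 - r ^ 2)),
          tau * x ^ alpha * eta * (r ^ 2 + u ^ 2) ^ (-(alpha / 2)) /
            (1 + tau * x ^ alpha * eta * (r ^ 2 + u ^ 2) ^ (-(alpha / 2)))))

noncomputable def K3 (mu rho alpha eta tau x : ℝ) : ℝ :=
  ∫ r in Set.Ioi rho,
    (1 - Real.exp (-2 * mu * ∫ u in Set.Ioi (0:ℝ),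
        tau * x ^ alpha * eta * (r ^ 2 + u ^ 2) ^ (-(alpha / 2)) /
          (1 + tau * x ^ alpha * eta * (r ^ 2 + u ^ 2) ^ (-(alpha / 2)))))

noncomputable def C_DL (lamB lamL mu rho alpha eta tau : ℝ) : ℝ :=
  ∫ x in Set.Ioi (0:ℝ),
    2 * Real.pi * lamB * x *
      Real.exp (-(Real.pi * lamB * K1 tau alpha x) - 2 * lamL * K2 mu rho alpha eta tau x
        - 2 * lamL * K3 mu rho alpha eta tau x)

/-!
As `τ → 0⁺` each interference term `c ℓ / (1 + c ℓ)`, with `ℓ ≥ 0` a path loss, is at most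
`c ℓ` where `c` is proportional to `τ`, so `K₁(x) → x²`, `K₂(x) → A(ρ, μ)` and `K₃(x) → 0`. For `K₃` one uses the scaling
`∫₀^∞ (r² + u²)^(-α/2) du = r^(1-α) ∫₀^∞ (1 + u²)^(-α/2) du`,
which is integrable over `r > ρ` because `α > 2`.
Since `K₁(x) ≥ x²` and `K₂, K₃ ≥ 0`, the integrand of `C_DL` is dominated by
`2πλ_b x exp(-πλ_b x²)`, and dominated convergence gives the limit
`∫₀^∞ 2πλ_b x exp(-πλ_b x² - 2λ_l A) dx = exp(-2λ_l A)`.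
-/

open Topology

theorem one_sub_exp_mem_Icc {t : ℝ} (ht : t ≤ 0) : 1 - exp t ∈ Icc 0 1 :=
  ⟨sub_nonneg.2 (exp_le_one_iff.2 ht), sub_le_self _ (exp_pos t).le⟩

theorem tendsto_mul_const_nhdsGT_zero (k : ℝ) :
    Tendsto (fun tau : ℝ => tau * k) (𝓝[>] 0) (𝓝 0) := by
  have h : Tendsto (fun tau : ℝ => tau * k) (𝓝 0) (𝓝 (0 * k)) := tendsto_id.mul_const k
  simpa using h.mono_left nhdsWithin_le_nhds

theorem integral_Ioi_mul_exp_neg_mul_sq {b : ℝ} (hb : 0 < b) :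
    ∫ x in Ioi (0:ℝ), x * exp (-b * x ^ 2) = (2 * b)⁻¹ := by
  have h := integral_mul_cexp_neg_mul_sq (b := (b : ℂ)) (by simpa using hb)
  rw [← Complex.ofReal_inj]
  push_cast
  rw [← h, ← integral_complex_ofReal]
  push_cast
  rfl

theorem integral_Ioi_mul_mul_exp_neg_mul_sq_sub (a : ℝ) {b : ℝ} (hb : 0 < b) (c : ℝ) :
    ∫ x in Ioi (0:ℝ), a * x * exp (-(b * x ^ 2) - c) = a / (2 * b) * exp (-c) := by
  have h : ∀ x : ℝ, a * x * exp (-(b * x ^ 2) - c) = a * exp (-c) * (x * exp (-b * x ^ 2)) :=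
    fun x => by rw [show -(b * x ^ 2) - c = -b * x ^ 2 + -c by ring, exp_add]; ring
  simp_rw [h]
  rw [integral_const_mul, integral_Ioi_mul_exp_neg_mul_sq hb]
  field_simp

theorem tendsto_setIntegral_mul_exp_of_le {ι : Type*} {l : Filter ι} [l.IsCountablyGenerated]
    (a : ℝ) {b : ℝ} (hb : 0 < b) {E : ι → ℝ → ℝ} {E₀ : ℝ → ℝ}
    (hE : ∀ᶠ i in l, Measurable (E i)) (hle : ∀ᶠ i in l, ∀ x, 0 < x → E i x ≤ -(b * x ^ 2))
    (hlim : ∀ x, 0 < x → Tendsto (fun i => E i x) l (𝓝 (E₀ x))) :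
    Tendsto (fun i => ∫ x in Ioi (0:ℝ), a * x * exp (E i x)) l
      (𝓝 (∫ x in Ioi (0:ℝ), a * x * exp (E₀ x))) := by
  refine tendsto_integral_filter_of_dominated_convergence
    (fun x => |a| * (x * exp (-b * x ^ 2))) ?_ ?_
    ((integrable_mul_exp_neg_mul_sq hb).integrableOn.const_mul _)
    ((ae_restrict_mem measurableSet_Ioi).mono fun x hx =>
      ((hlim x hx).rexp.const_mul (a * x)))
  · exact hE.mono fun i hi => (by fun_prop : Measurable _).aestronglyMeasurable
  · refine hle.mono fun i hi => (ae_restrict_mem measurableSet_Ioi).mono fun x (hx : 0 < x) => ?_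
    rw [norm_mul, norm_mul, Real.norm_eq_abs a, norm_of_nonneg hx.le,
      norm_of_nonneg (exp_pos _).le, neg_mul, mul_assoc]
    gcongr
    exact hi x hx

theorem Measurable.setIntegral_prodMk_left {α β : Type*} [MeasurableSpace α] [MeasurableSpace β]
    {ν : Measure β} [SFinite ν] {f : α × β → ℝ} (hf : Measurable f) {s : Set (α × β)}
    (hs : MeasurableSet s) : Measurable fun a => ∫ b in Prod.mk a ⁻¹' s, f (a, b) ∂ν := by
  have key (a : α) : ∫ b in Prod.mk a ⁻¹' s, f (a, b) ∂ν = ∫ b, s.indicator f (a, b) ∂ν := by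
    rw [← integral_indicator (measurable_prodMk_left hs)]
    rfl
  simp_rw [key]
  exact (hf.indicator hs).stronglyMeasurable.integral_prod_right'.measurable

section LaplaceTerm

variable {α : Type*} [MeasurableSpace α] {μ : Measure α} {f g : α → ℝ}

theorem mul_div_one_add_mul_nonneg {c a b : ℝ} (hc : 0 ≤ c) (ha : 0 ≤ a) (hb : 0 ≤ b) :
    0 ≤ c * a / (1 + c * b) := by
  positivity

theorem mul_div_one_add_mul_le {c a b : ℝ} (hc : 0 ≤ c) (ha : 0 ≤ a) (hb : 0 ≤ b) :
    c * a / (1 + c * b) ≤ c * a :=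
  div_le_self (by positivity) (le_add_of_nonneg_right (by positivity))

theorem integral_mul_div_one_add_mul_le {c : ℝ} (hc : 0 ≤ c) (hf : Integrable f μ)
    (hf₀ : 0 ≤ᵐ[μ] f) (hg₀ : 0 ≤ᵐ[μ] g) :
    ∫ a, c * f a / (1 + c * g a) ∂μ ≤ c * ∫ a, f a ∂μ := by
  rw [← integral_const_mul]
  exact integral_mono_of_nonneg
    ((hf₀.and hg₀).mono fun a ha => mul_div_one_add_mul_nonneg hc ha.1 ha.2) (hf.const_mul c)
    ((hf₀.and hg₀).mono fun a ha => mul_div_one_add_mul_le hc ha.1 ha.2)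

theorem tendsto_integral_mul_div_one_add_mul {ι : Type*} {l : Filter ι} {c : ι → ℝ}
    (hc : Tendsto c l (𝓝 0)) (hc₀ : ∀ᶠ i in l, 0 ≤ c i) (hf : Integrable f μ)
    (hf₀ : 0 ≤ᵐ[μ] f) (hg₀ : 0 ≤ᵐ[μ] g) :
    Tendsto (fun i => ∫ a, c i * f a / (1 + c i * g a) ∂μ) l (𝓝 0) := by
  refine squeeze_zero' (hc₀.mono fun i hi => integral_nonneg_of_ae ?_)
    (hc₀.mono fun i hi => integral_mul_div_one_add_mul_le hi hf hf₀ hg₀)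
    (by simpa using hc.mul_const (∫ a, f a ∂μ))
  exact (hf₀.and hg₀).mono fun a ha => mul_div_one_add_mul_nonneg hi ha.1 ha.2

end LaplaceTerm

noncomputable def pathLoss (alpha r u : ℝ) : ℝ := (r ^ 2 + u ^ 2) ^ (-(alpha / 2))

noncomputable def lineInterference (alpha c r s : ℝ) : ℝ :=
  ∫ u in Ioi s, c * pathLoss alpha r u / (1 + c * pathLoss alpha r u)

section PathLoss

variable {alpha r : ℝ}

theorem pathLoss_nonneg (alpha r u : ℝ) : 0 ≤ pathLoss alpha r u :=
  rpow_nonneg (by positivity) _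

theorem pathLoss_eq_mul_pathLoss_one (hr : 0 < r) (u : ℝ) :
    pathLoss alpha r u = r ^ (-alpha) * pathLoss alpha 1 (r⁻¹ * u) := by
  have h : r ^ 2 + u ^ 2 = r ^ 2 * (1 ^ 2 + (r⁻¹ * u) ^ 2) := by field_simp
  rw [pathLoss, pathLoss, h, mul_rpow (by positivity) (by positivity), ← rpow_natCast,
    ← rpow_mul hr.le]
  congr 2
  push_cast
  ring

theorem integrable_pathLoss (halpha : 1 < alpha) (hr : 0 < r) : Integrable (pathLoss alpha r) := by
  have h₁ : Integrable fun u => pathLoss alpha 1 u := by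
    simpa [pathLoss, neg_div] using
      integrable_rpow_neg_one_add_norm_sq (E := ℝ) (μ := volume) (r := alpha) (by simpa)
  have := (h₁.comp_mul_left' (inv_ne_zero hr.ne')).const_mul (r ^ (-alpha))
  simpa only [← pathLoss_eq_mul_pathLoss_one hr] using this

theorem integral_Ioi_pathLoss (hr : 0 < r) :
    ∫ u in Ioi 0, pathLoss alpha r u = r ^ (1 - alpha) * ∫ u in Ioi 0, pathLoss alpha 1 u := by
  simp_rw [pathLoss_eq_mul_pathLoss_one hr]
  rw [integral_const_mul, integral_comp_mul_left_Ioi _ _ (inv_pos.2 hr), mul_zero, inv_inv,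
    smul_eq_mul, sub_eq_add_neg, rpow_add hr, rpow_one]
  ring

end PathLoss

section LineInterference

variable {alpha c r : ℝ}

theorem lineInterference_nonneg (hc : 0 ≤ c) (s : ℝ) : 0 ≤ lineInterference alpha c r s :=
  setIntegral_nonneg measurableSet_Ioi fun _ _ =>
    mul_div_one_add_mul_nonneg hc (pathLoss_nonneg _ _ _) (pathLoss_nonneg _ _ _)

theorem lineInterference_zero_le (hc : 0 ≤ c) (halpha : 1 < alpha) (hr : 0 < r) :
    lineInterference alpha c r 0 ≤ c * r ^ (1 - alpha) * ∫ u in Ioi 0, pathLoss alpha 1 u := by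
  rw [mul_assoc, ← integral_Ioi_pathLoss hr]
  exact integral_mul_div_one_add_mul_le hc (integrable_pathLoss halpha hr).integrableOn
    (Eventually.of_forall (pathLoss_nonneg _ _)) (Eventually.of_forall (pathLoss_nonneg _ _))

theorem tendsto_lineInterference {ι : Type*} {l : Filter ι} {c : ι → ℝ}
    (hc : Tendsto c l (𝓝 0)) (hc₀ : ∀ᶠ i in l, 0 ≤ c i) (halpha : 1 < alpha) (hr : 0 < r) (s : ℝ) :
    Tendsto (fun i => lineInterference alpha (c i) r s) l (𝓝 0) :=
  tendsto_integral_mul_div_one_add_mul hc hc₀ (integrable_pathLoss halpha hr).integrableOn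
    (Eventually.of_forall (pathLoss_nonneg _ _)) (Eventually.of_forall (pathLoss_nonneg _ _))

@[fun_prop]
theorem Measurable.lineInterference {β : Type*} [MeasurableSpace β] {c r s : β → ℝ}
    (hc : Measurable c) (hr : Measurable r) (hs : Measurable s) :
    Measurable fun b => _root_.lineInterference alpha (c b) (r b) (s b) :=
  Measurable.setIntegral_prodMk_left (ν := volume)
    (f := fun p : β × ℝ =>
      c p.1 * pathLoss alpha (r p.1) p.2 / (1 + c p.1 * pathLoss alpha (r p.1) p.2))
    (by unfold pathLoss; fun_prop) (measurableSet_lt (hs.comp measurable_fst) measurable_snd)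

end LineInterference

section Coverage

variable {mu rho alpha eta tau x : ℝ}

theorem K2_eq : K2 mu rho alpha eta tau x = ∫ r in (0:ℝ)..rho,
    (1 - exp (-2 * mu * √(rho ^ 2 - r ^ 2)
      - 2 * mu * lineInterference alpha (tau * x ^ alpha * eta) r √(rho ^ 2 - r ^ 2))) := rfl

theorem K3_eq : K3 mu rho alpha eta tau x =
    ∫ r in Ioi rho, (1 - exp (-2 * mu * lineInterference alpha (tau * x ^ alpha * eta) r 0)) := rfl

@[fun_prop]
theorem measurable_K1 : Measurable fun x => K1 tau alpha x := by
  have h := Measurable.setIntegral_prodMk_left (ν := volume) (s := {p : ℝ × ℝ | p.1 < p.2})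
    (f := fun p =>
      tau * p.1 ^ alpha * p.2 ^ (1 - alpha) / (1 + tau * p.1 ^ alpha * p.2 ^ (-alpha)))
    (by fun_prop) (measurableSet_lt measurable_fst measurable_snd)
  exact (measurable_id.pow_const 2).add (h.const_mul 2)

@[fun_prop]
theorem measurable_K2 : Measurable fun x => K2 mu rho alpha eta tau x := by
  have h : Measurable fun p : ℝ × ℝ => 1 - exp (-2 * mu * √(rho ^ 2 - p.2 ^ 2)
      - 2 * mu * lineInterference alpha (tau * p.1 ^ alpha * eta) p.2 √(rho ^ 2 - p.2 ^ 2)) := by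
    fun_prop
  simp only [K2_eq, intervalIntegral]
  exact (h.stronglyMeasurable.integral_prod_right' (ν := volume.restrict _)).measurable.sub
    (h.stronglyMeasurable.integral_prod_right' (ν := volume.restrict _)).measurable

@[fun_prop]
theorem measurable_K3 : Measurable fun x => K3 mu rho alpha eta tau x := by
  have h : Measurable fun p : ℝ × ℝ =>
      1 - exp (-2 * mu * lineInterference alpha (tau * p.1 ^ alpha * eta) p.2 0) := by
    fun_prop
  simp only [K3_eq]
  exact (h.stronglyMeasurable.integral_prod_right' (ν := volume.restrict _)).measurable

theorem sq_le_K1 (htau : 0 ≤ tau) (hx : 0 ≤ x) : x ^ 2 ≤ K1 tau alpha x :=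
  le_add_of_nonneg_right <| mul_nonneg zero_le_two <| setIntegral_nonneg measurableSet_Ioi
    fun r (hr : x < r) => mul_div_one_add_mul_nonneg (by positivity)
      (rpow_nonneg (hx.trans hr.le) _) (rpow_nonneg (hx.trans hr.le) _)

theorem tendsto_K1 (halpha : 2 < alpha) (hx : 0 < x) :
    Tendsto (fun tau => K1 tau alpha x) (𝓝[>] 0) (𝓝 (x ^ 2)) := by
  have h := tendsto_integral_mul_div_one_add_mul (μ := volume.restrict (Ioi x))
    (g := fun r => r ^ (-alpha)) (tendsto_mul_const_nhdsGT_zero (x ^ alpha))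
    (eventually_mem_nhdsWithin.mono fun tau (htau : 0 < tau) => by positivity)
    (integrableOn_Ioi_rpow_of_lt (a := 1 - alpha) (by linarith) hx)
    ((ae_restrict_mem measurableSet_Ioi).mono fun r (hr : x < r) =>
      rpow_nonneg (hx.trans hr).le _)
    ((ae_restrict_mem measurableSet_Ioi).mono fun r (hr : x < r) =>
      rpow_nonneg (hx.trans hr).le _)
  have h₂ := (h.const_mul 2).const_add (x ^ 2)
  rw [mul_zero, add_zero] at h₂
  exact h₂

theorem K2_nonneg (hmu : 0 ≤ mu) (hrho : 0 ≤ rho) (hc : 0 ≤ tau * x ^ alpha * eta) :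
    0 ≤ K2 mu rho alpha eta tau x := by
  rw [K2_eq]
  refine intervalIntegral.integral_nonneg hrho fun r _ => (one_sub_exp_mem_Icc ?_).1
  nlinarith [sqrt_nonneg (rho ^ 2 - r ^ 2),
    lineInterference_nonneg (alpha := alpha) (r := r) hc √(rho ^ 2 - r ^ 2)]

theorem tendsto_K2 (hmu : 0 ≤ mu) (hrho : 0 ≤ rho) (halpha : 1 < alpha) (hx : 0 ≤ x)
    (heta : 0 ≤ eta) :
    Tendsto (fun tau => K2 mu rho alpha eta tau x) (𝓝[>] 0) (𝓝 (A rho mu)) := by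
  have hc : Tendsto (fun tau => tau * x ^ alpha * eta) (𝓝[>] 0) (𝓝 0) := by
    simpa using (tendsto_mul_const_nhdsGT_zero (x ^ alpha)).mul_const eta
  have hc₀ : ∀ᶠ tau in 𝓝[>] (0:ℝ), 0 ≤ tau * x ^ alpha * eta :=
    eventually_mem_nhdsWithin.mono fun tau (htau : 0 < tau) => by positivity
  simp only [K2_eq, A, intervalIntegral.integral_of_le hrho]
  refine tendsto_integral_filter_of_dominated_convergence (fun _ => 1)
    (Eventually.of_forall fun tau => (by fun_prop : Measurable _).aestronglyMeasurable)
    (hc₀.mono fun tau htau => Eventually.of_forall fun r => ?_)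
    (integrableOn_const measure_Ioc_lt_top.ne)
    ((ae_restrict_mem measurableSet_Ioc).mono fun r hr => ?_)
  · have h := one_sub_exp_mem_Icc (t := -2 * mu * √(rho ^ 2 - r ^ 2)
      - 2 * mu * lineInterference alpha (tau * x ^ alpha * eta) r √(rho ^ 2 - r ^ 2))
      (by nlinarith [sqrt_nonneg (rho ^ 2 - r ^ 2),
        lineInterference_nonneg (alpha := alpha) (r := r) htau √(rho ^ 2 - r ^ 2)])
    rw [norm_of_nonneg h.1]
    exact h.2
  · have h := tendsto_lineInterference hc hc₀ halpha hr.1 √(rho ^ 2 - r ^ 2)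
    simpa using
      ((h.const_mul (2 * mu)).const_sub (-2 * mu * √(rho ^ 2 - r ^ 2))).rexp.const_sub 1

theorem K3_nonneg (hmu : 0 ≤ mu) (hc : 0 ≤ tau * x ^ alpha * eta) :
    0 ≤ K3 mu rho alpha eta tau x := by
  rw [K3_eq]
  exact setIntegral_nonneg measurableSet_Ioi fun r _ => (one_sub_exp_mem_Icc (by
    nlinarith [lineInterference_nonneg (alpha := alpha) (r := r) hc 0])).1

theorem K3_le (hmu : 0 ≤ mu) (hrho : 0 < rho) (halpha : 2 < alpha)
    (hc : 0 ≤ tau * x ^ alpha * eta) :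
    K3 mu rho alpha eta tau x ≤ tau * ∫ r in Ioi rho,
      2 * mu * x ^ alpha * eta * (∫ u in Ioi 0, pathLoss alpha 1 u) * r ^ (1 - alpha) := by
  set M := ∫ u in Ioi 0, pathLoss alpha 1 u
  rw [K3_eq, ← integral_const_mul]
  refine integral_mono_of_nonneg (Eventually.of_forall fun r => ?_)
    (((integrableOn_Ioi_rpow_of_lt (a := 1 - alpha) (by linarith) hrho).const_mul
      (2 * mu * x ^ alpha * eta * M)).const_mul tau)
    ((ae_restrict_mem measurableSet_Ioi).mono fun r (hr : rho < r) => ?_)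
  · exact (one_sub_exp_mem_Icc
      (by nlinarith [lineInterference_nonneg (alpha := alpha) (r := r) hc 0])).1
  · set J := lineInterference alpha (tau * x ^ alpha * eta) r 0
    calc 1 - exp (-2 * mu * J) ≤ 2 * mu * J := by linarith [add_one_le_exp (-2 * mu * J)]
      _ ≤ 2 * mu * (tau * x ^ alpha * eta * r ^ (1 - alpha) * M) :=
        mul_le_mul_of_nonneg_left (lineInterference_zero_le hc (by linarith) (hrho.trans hr))
          (by positivity)
      _ = _ := by ring

theorem tendsto_K3 (hmu : 0 ≤ mu) (hrho : 0 < rho) (halpha : 2 < alpha) (hx : 0 ≤ x)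
    (heta : 0 ≤ eta) :
    Tendsto (fun tau => K3 mu rho alpha eta tau x) (𝓝[>] 0) (𝓝 0) := by
  have hc₀ : ∀ᶠ tau in 𝓝[>] (0:ℝ), 0 ≤ tau * x ^ alpha * eta :=
    eventually_mem_nhdsWithin.mono fun tau (htau : 0 < tau) => by positivity
  exact squeeze_zero' (hc₀.mono fun _ => K3_nonneg hmu) (hc₀.mono fun _ => K3_le hmu hrho halpha)
    (by simpa using tendsto_mul_const_nhdsGT_zero _)

end Coverage

theorem downlink_coverage_tendsto_assoc (lamB lamL mu rho alpha eta : ℝ) (hlamB : 0 < lamB) (hlamL : 0 < lamL)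
    (hmu : 0 < mu) (hrho : 0 < rho) (halpha : 2 < alpha) (heta : 0 < eta) :
    Filter.Tendsto (fun tau => C_DL lamB lamL mu rho alpha eta tau)
      (nhdsWithin 0 (Set.Ioi (0:ℝ))) (nhds (P_DL lamL mu rho)) := by
  have hb : 0 < π * lamB := by positivity
  have hlim := tendsto_setIntegral_mul_exp_of_le (l := 𝓝[>] 0) (2 * π * lamB) hb
    (E := fun tau x => -(π * lamB * K1 tau alpha x) - 2 * lamL * K2 mu rho alpha eta tau x
      - 2 * lamL * K3 mu rho alpha eta tau x)
    (E₀ := fun x => -(π * lamB * x ^ 2) - 2 * lamL * A rho mu)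
    (Eventually.of_forall fun tau => by fun_prop)
    (eventually_mem_nhdsWithin.mono fun tau (htau : 0 < tau) x (hx : 0 < x) => by
      have hc : 0 ≤ tau * x ^ alpha * eta := by positivity
      nlinarith [sq_le_K1 (alpha := alpha) htau.le hx.le, K2_nonneg hmu.le hrho.le hc,
        K3_nonneg (rho := rho) hmu.le hc])
    (fun x hx => by
      simpa using (((tendsto_K1 halpha hx).const_mul (π * lamB)).neg.sub
        ((tendsto_K2 hmu.le hrho.le (by linarith) hx.le heta.le).const_mul (2 * lamL))).sub
        ((tendsto_K3 hmu.le hrho halpha hx.le heta.le).const_mul (2 * lamL)))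
  have hval :
      2 * π * lamB / (2 * (π * lamB)) * exp (-(2 * lamL * A rho mu)) = P_DL lamL mu rho := by
    rw [P_DL, mul_assoc, div_self (by positivity), one_mul, neg_mul, neg_mul]
  rw [integral_Ioi_mul_mul_exp_neg_mul_sq_sub _ hb, hval] at hlim
  exact hlim
end
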